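/- arXiv:math/0403102 — 2 statements merged into one kernel-verified Lean document; each statement's English description precedes it below -/
import Mathlib

section
/- Starting from the pairing vector (1,0,-3,-2,2) and successively adding 2M·e_i for the index sequence (1,2,1,5,4,1,2,1,3,1,2,1,4,1,2,1,5), at every step the i-th coordinate of the current vector (before the addition) equals -M_{ii}, and the negative of the final vector satisfies M_{jj}+2 ≤ coordinate_j ≤ -M_{jj} for all j; i.e., K₂ carries a full path of length 17 in the Ozsváth–Szabó algorithm. -/
open Matrix

/-- The intersection matrix of the plumbing tree, over ℤ. -/
def M : Matrix (Fin 5) (Fin 5) ℤ :=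
  !![-1, 1, 1, 1, 0;
      1,-2, 0, 0, 0;
      1, 0,-5, 0, 0;
      1, 0, 0,-4, 1;
      0, 0, 0, 1,-2]

/-- 2M·e_i : twice the i-th column of M. -/
def twoCol (i : Fin 5) : Fin 5 → ℤ := fun j => 2 * M j i

/-- `goodPath u l` : successively adding 2M·e_i to u along the index list l,
before each addition the i-th coordinate of the current vector equals -M_ii,
and at the end the negative of the final vector satisfies
M_jj+2 ≤ ·_j ≤ -M_jj for all j (a full path in the Ozsváth–Szabó algorithm). -/
def goodPath (u : Fin 5 → ℤ) : List (Fin 5) → Prop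
  | [] => ∀ j, M j j + 2 ≤ -u j ∧ -u j ≤ -M j j
  | i :: l => u i = -M i i ∧ goodPath (u + twoCol i) l

/-- K₂, with pairing vector (1,0,-3,-2,2), carries the full path of length 17
given by the index sequence 1,2,1,5,4,1,2,1,3,1,2,1,4,1,2,1,5. -/
theorem full_path_K2 :
    goodPath ![1, 0, -3, -2, 2]
      [0, 1, 0, 4, 3, 0, 1, 0, 2, 0, 1, 0, 3, 0, 1, 0, 4] := by
  simp only [goodPath]
  decide
end

section
/- Among the 80 characteristic pairing vectors u ∈ ℤ⁵ satisfying M_{ii}+2 ≤ u_i ≤ -M_{ii} for all i, exactly three—namely (1,0,-3,-2,0), (1,0,-3,-2,2), and (1,0,-1,-2,0)—admit a full path: a finite sequence u = u⁰, u¹, …, uᵏ where each uʲ⁺¹ = uʲ + 2M·e_{i_j} for some index i_j with (uʲ)_{i_j} = -M_{i_j i_j}, terminating at uᵏ with -uᵏ satisfying M_{ii}+2 ≤ (-uᵏ)_i ≤ -M_{ii} for all i. -/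
open Matrix

instance goodPath.dec : ∀ (l : List (Fin 5)) (u : Fin 5 → ℤ), Decidable (goodPath u l)
  | [], _ => by unfold goodPath; infer_instance
  | i :: l, u => by unfold goodPath; exact @instDecidableAnd _ _ _ (goodPath.dec l _)

abbrev T := ℤ × ℤ × ℤ × ℤ × ℤ

def toFun (t : T) : Fin 5 → ℤ := ![t.1, t.2.1, t.2.2.1, t.2.2.2.1, t.2.2.2.2]

def dg : Fin 5 → ℤ := ![-1, -2, -5, -4, -2]

def stepT : Fin 5 → T → T
  | 0, (a,b,c,d,e) => (a-2, b+2, c+2, d+2, e)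
  | 1, (a,b,c,d,e) => (a+2, b-4, c, d, e)
  | 2, (a,b,c,d,e) => (a+2, b, c-10, d, e)
  | 3, (a,b,c,d,e) => (a+2, b, c, d-8, e+2)
  | 4, (a,b,c,d,e) => (a, b, c, d+2, e-4)

lemma dgM : ∀ j, dg j = M j j := by decide

lemma step_comm (i : Fin 5) (t : T) : toFun (stepT i t) = toFun t + twoCol i := by
  obtain ⟨a, b, c, d, e⟩ := t
  fin_cases i <;> (funext j; fin_cases j) <;>
    simp [toFun, stepT, twoCol, M, Matrix.vecHead, Matrix.vecTail, Pi.add_apply] <;> ring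

def S0 : List T := [
  (-1, 0, -1, 4, 2),
  (-1, 0, -1, 4, 4),
  (-1, 0, -1, 6, -2),
  (-1, 0, -1, 6, 0),
  (-1, 0, -1, 6, 2),
  (-1, 0, -1, 8, -2),
  (-1, 0, -1, 8, 0),
  (-1, 0, -1, 8, 2),
  (-1, 0, -1, 10, -2),
  (-1, 0, -1, 10, 0),
  (-1, 0, -1, 10, 2),
  (-1, 0, -1, 12, -2),
  (-1, 0, -1, 12, 0),
  (-1, 0, -1, 12, 2),
  (-1, 0, -1, 14, -2),
  (-1, 0, 1, 4, 0),
  (-1, 0, 1, 4, 2),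
  (-1, 0, 1, 6, -2),
  (-1, 0, 1, 6, 0),
  (-1, 0, 1, 6, 2),
  (-1, 0, 1, 8, -2),
  (-1, 0, 1, 8, 0),
  (-1, 0, 1, 8, 2),
  (-1, 0, 1, 10, -2),
  (-1, 0, 3, 0, 4),
  (-1, 0, 3, 0, 6),
  (-1, 0, 3, 2, 2),
  (-1, 0, 3, 4, -2),
  (-1, 0, 3, 4, 0),
  (-1, 0, 3, 4, 2),
  (-1, 0, 3, 6, -2),
  (-1, 0, 3, 6, 0),
  (-1, 0, 3, 6, 2),
  (-1, 0, 3, 8, -2),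
  (-1, 0, 3, 8, 0),
  (-1, 0, 3, 8, 2),
  (-1, 0, 3, 10, -2),
  (-1, 0, 5, 0, 2),
  (-1, 0, 5, 0, 4),
  (-1, 0, 5, 2, -2),
  (-1, 0, 5, 2, 0),
  (-1, 0, 5, 2, 2),
  (-1, 0, 5, 4, -2),
  (-1, 0, 5, 4, 0),
  (-1, 0, 5, 4, 2),
  (-1, 0, 5, 6, -2),
  (-1, 0, 5, 6, 0),
  (-1, 0, 5, 6, 2),
  (-1, 0, 5, 8, -2),
  (-1, 0, 5, 8, 0),
  (-1, 0, 5, 8, 2),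
  (-1, 0, 5, 10, -2),
  (-1, 0, 7, 0, 0),
  (-1, 0, 7, 0, 2),
  (-1, 0, 7, 0, 4),
  (-1, 0, 7, 2, -2),
  (-1, 0, 7, 2, 0),
  (-1, 0, 7, 2, 2),
  (-1, 0, 7, 4, -2),
  (-1, 0, 7, 4, 0)]

def S1 : List T := [
  (-1, 0, 7, 4, 2),
  (-1, 0, 7, 6, -2),
  (-1, 0, 7, 6, 0),
  (-1, 0, 7, 6, 2),
  (-1, 0, 7, 8, -2),
  (-1, 0, 7, 8, 0),
  (-1, 0, 7, 8, 2),
  (-1, 0, 7, 10, -2),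
  (-1, 0, 9, 0, 0),
  (-1, 0, 9, 0, 2),
  (-1, 0, 9, 0, 4),
  (-1, 0, 9, 2, -2),
  (-1, 0, 9, 2, 0),
  (-1, 0, 9, 2, 2),
  (-1, 0, 9, 4, -2),
  (-1, 0, 9, 4, 0),
  (-1, 0, 9, 4, 2),
  (-1, 0, 9, 6, -2),
  (-1, 0, 9, 6, 0),
  (-1, 0, 9, 6, 2),
  (-1, 0, 9, 8, -2),
  (-1, 0, 9, 8, 0),
  (-1, 0, 9, 8, 2),
  (-1, 0, 9, 10, -2),
  (-1, 0, 11, 0, 0),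
  (-1, 0, 11, 0, 2),
  (-1, 0, 11, 0, 4),
  (-1, 0, 11, 2, -2),
  (-1, 0, 13, 0, 0),
  (-1, 0, 13, 0, 2),
  (-1, 0, 13, 0, 4),
  (-1, 0, 13, 2, -2),
  (-1, 2, -3, 2, 2),
  (-1, 2, -3, 2, 4),
  (-1, 2, -3, 4, -2),
  (-1, 2, -3, 4, 0),
  (-1, 2, -3, 4, 2),
  (-1, 2, -3, 6, -2),
  (-1, 2, -3, 6, 0),
  (-1, 2, -3, 6, 2),
  (-1, 2, -3, 8, -2),
  (-1, 2, -3, 8, 0),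
  (-1, 2, -3, 8, 2),
  (-1, 2, -3, 10, -2),
  (-1, 2, -3, 10, 0),
  (-1, 2, -3, 10, 2),
  (-1, 2, -3, 12, -2),
  (-1, 2, -1, 2, 0),
  (-1, 2, -1, 2, 2),
  (-1, 2, -1, 4, -2),
  (-1, 2, -1, 4, 0),
  (-1, 2, -1, 4, 2),
  (-1, 2, -1, 6, -2),
  (-1, 2, -1, 6, 0),
  (-1, 2, -1, 6, 2),
  (-1, 2, -1, 8, -2),
  (-1, 2, 1, -2, 4),
  (-1, 2, 1, -2, 6),
  (-1, 2, 1, 0, 2),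
  (-1, 2, 1, 2, -2)]

def S2 : List T := [
  (-1, 2, 1, 2, 0),
  (-1, 2, 1, 2, 2),
  (-1, 2, 1, 4, -2),
  (-1, 2, 1, 4, 0),
  (-1, 2, 1, 4, 2),
  (-1, 2, 1, 6, -2),
  (-1, 2, 1, 6, 0),
  (-1, 2, 1, 6, 2),
  (-1, 2, 1, 8, -2),
  (-1, 2, 3, -2, 2),
  (-1, 2, 3, -2, 4),
  (-1, 2, 3, 0, -2),
  (-1, 2, 3, 0, 0),
  (-1, 2, 3, 0, 2),
  (-1, 2, 3, 2, -2),
  (-1, 2, 3, 2, 0),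
  (-1, 2, 3, 2, 2),
  (-1, 2, 3, 4, -2),
  (-1, 2, 3, 4, 0),
  (-1, 2, 3, 4, 2),
  (-1, 2, 3, 6, -2),
  (-1, 2, 3, 6, 0),
  (-1, 2, 3, 6, 2),
  (-1, 2, 3, 8, -2),
  (-1, 2, 5, -2, 0),
  (-1, 2, 5, -2, 2),
  (-1, 2, 5, -2, 4),
  (-1, 2, 5, 0, -2),
  (-1, 2, 5, 0, 0),
  (-1, 2, 5, 0, 2),
  (-1, 2, 5, 2, -2),
  (-1, 2, 5, 2, 0),
  (-1, 2, 5, 2, 2),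
  (-1, 2, 5, 4, -2),
  (-1, 2, 5, 4, 0),
  (-1, 2, 5, 4, 2),
  (-1, 2, 5, 6, -2),
  (-1, 2, 5, 6, 0),
  (-1, 2, 5, 6, 2),
  (-1, 2, 5, 8, -2),
  (-1, 2, 7, -2, 0),
  (-1, 2, 7, -2, 2),
  (-1, 2, 7, -2, 4),
  (-1, 2, 7, 0, -2),
  (-1, 2, 7, 0, 0),
  (-1, 2, 7, 0, 2),
  (-1, 2, 7, 2, -2),
  (-1, 2, 7, 2, 0),
  (-1, 2, 7, 2, 2),
  (-1, 2, 7, 4, -2),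
  (-1, 2, 7, 4, 0),
  (-1, 2, 7, 4, 2),
  (-1, 2, 7, 6, -2),
  (-1, 2, 7, 6, 0),
  (-1, 2, 7, 6, 2),
  (-1, 2, 7, 8, -2),
  (-1, 2, 9, -2, 0),
  (-1, 2, 9, -2, 2),
  (-1, 2, 9, -2, 4),
  (-1, 2, 9, 0, -2)]

def S3 : List T := [
  (-1, 2, 11, -2, 0),
  (-1, 2, 11, -2, 2),
  (-1, 2, 11, -2, 4),
  (-1, 2, 11, 0, -2),
  (-1, 4, -3, 0, 0),
  (-1, 4, -3, 0, 2),
  (-1, 4, -3, 0, 4),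
  (-1, 4, -3, 2, -2),
  (-1, 4, -3, 2, 0),
  (-1, 4, -3, 2, 2),
  (-1, 4, -3, 4, -2),
  (-1, 4, -3, 4, 0),
  (-1, 4, -3, 4, 2),
  (-1, 4, -3, 6, -2),
  (-1, 4, -3, 6, 0),
  (-1, 4, -3, 6, 2),
  (-1, 4, -3, 8, -2),
  (-1, 4, -3, 8, 0),
  (-1, 4, -3, 8, 2),
  (-1, 4, -3, 10, -2),
  (-1, 4, -1, -2, 0),
  (-1, 4, -1, -2, 2),
  (-1, 4, -1, -2, 4),
  (-1, 4, -1, 0, -2),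
  (-1, 4, -1, 0, 0),
  (-1, 4, -1, 0, 2),
  (-1, 4, -1, 2, -2),
  (-1, 4, -1, 2, 0),
  (-1, 4, -1, 2, 2),
  (-1, 4, -1, 4, -2),
  (-1, 4, -1, 4, 0),
  (-1, 4, -1, 4, 2),
  (-1, 4, -1, 6, -2),
  (-1, 4, -1, 6, 0),
  (-1, 4, -1, 6, 2),
  (-1, 4, -1, 8, -2),
  (-1, 4, 1, -2, 0),
  (-1, 4, 1, -2, 2),
  (-1, 4, 1, -2, 4),
  (-1, 4, 1, 0, -2),
  (-1, 4, 1, 0, 0),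
  (-1, 4, 1, 0, 2),
  (-1, 4, 1, 2, -2),
  (-1, 4, 1, 2, 0),
  (-1, 4, 1, 2, 2),
  (-1, 4, 1, 4, -2),
  (-1, 4, 1, 4, 0),
  (-1, 4, 1, 4, 2),
  (-1, 4, 1, 6, -2),
  (-1, 4, 1, 6, 0),
  (-1, 4, 1, 6, 2),
  (-1, 4, 1, 8, -2),
  (-1, 4, 3, -2, 0),
  (-1, 4, 3, -2, 2),
  (-1, 4, 3, -2, 4),
  (-1, 4, 3, 0, -2),
  (-1, 4, 3, 0, 0),
  (-1, 4, 3, 0, 2),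
  (-1, 4, 3, 2, -2),
  (-1, 4, 3, 2, 0)]

def S4 : List T := [
  (-1, 4, 3, 2, 2),
  (-1, 4, 3, 4, -2),
  (-1, 4, 3, 4, 0),
  (-1, 4, 3, 4, 2),
  (-1, 4, 3, 6, -2),
  (-1, 4, 3, 6, 0),
  (-1, 4, 3, 6, 2),
  (-1, 4, 3, 8, -2),
  (-1, 4, 5, -2, 0),
  (-1, 4, 5, -2, 2),
  (-1, 4, 5, -2, 4),
  (-1, 4, 5, 0, -2),
  (-1, 4, 5, 0, 0),
  (-1, 4, 5, 0, 2),
  (-1, 4, 5, 2, -2),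
  (-1, 4, 5, 2, 0),
  (-1, 4, 5, 2, 2),
  (-1, 4, 5, 4, -2),
  (-1, 4, 5, 4, 0),
  (-1, 4, 5, 4, 2),
  (-1, 4, 5, 6, -2),
  (-1, 4, 5, 6, 0),
  (-1, 4, 5, 6, 2),
  (-1, 4, 5, 8, -2),
  (-1, 4, 7, -2, 0),
  (-1, 4, 7, -2, 2),
  (-1, 4, 7, -2, 4),
  (-1, 4, 7, 0, -2),
  (-1, 4, 7, 0, 0),
  (-1, 4, 7, 0, 2),
  (-1, 4, 7, 2, -2),
  (-1, 4, 7, 2, 0),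
  (-1, 4, 7, 2, 2),
  (-1, 4, 7, 4, -2),
  (-1, 4, 7, 4, 0),
  (-1, 4, 7, 4, 2),
  (-1, 4, 7, 6, -2),
  (-1, 4, 7, 6, 0),
  (-1, 4, 7, 6, 2),
  (-1, 4, 7, 8, -2),
  (-1, 4, 9, -2, 0),
  (-1, 4, 9, -2, 2),
  (-1, 4, 9, -2, 4),
  (-1, 4, 9, 0, -2),
  (-1, 6, -3, 0, 0),
  (-1, 6, -3, 0, 2),
  (-1, 6, -3, 0, 4),
  (-1, 6, -3, 2, -2),
  (-1, 6, -3, 2, 0),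
  (-1, 6, -3, 2, 2),
  (-1, 6, -3, 4, -2),
  (-1, 6, -3, 4, 0),
  (-1, 6, -3, 4, 2),
  (-1, 6, -3, 6, -2),
  (-1, 6, -3, 6, 0),
  (-1, 6, -3, 6, 2),
  (-1, 6, -3, 8, -2),
  (-1, 6, -3, 8, 0),
  (-1, 6, -3, 8, 2),
  (-1, 6, -3, 10, -2)]

def S5 : List T := [
  (-1, 6, -1, -2, 0),
  (-1, 6, -1, -2, 2),
  (-1, 6, -1, -2, 4),
  (-1, 6, -1, 0, -2),
  (-1, 6, 1, -2, 0),
  (-1, 6, 1, -2, 2),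
  (-1, 6, 1, -2, 4),
  (-1, 6, 1, 0, -2),
  (-1, 6, 3, -2, 0),
  (-1, 6, 3, -2, 2),
  (-1, 6, 3, -2, 4),
  (-1, 6, 3, 0, -2),
  (-1, 6, 5, -2, 0),
  (-1, 6, 5, -2, 2),
  (-1, 6, 5, -2, 4),
  (-1, 6, 5, 0, -2),
  (-1, 6, 7, -2, 0),
  (-1, 6, 7, -2, 2),
  (-1, 6, 7, -2, 4),
  (-1, 6, 7, 0, -2),
  (-1, 6, 9, -2, 0),
  (-1, 6, 9, -2, 2),
  (-1, 6, 9, -2, 4),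
  (-1, 6, 9, 0, -2),
  (-1, 8, -3, 0, 0),
  (-1, 8, -3, 0, 2),
  (-1, 8, -3, 0, 4),
  (-1, 8, -3, 2, -2),
  (-1, 8, -1, -2, 0),
  (-1, 8, -1, -2, 2),
  (-1, 8, -1, -2, 4),
  (-1, 8, -1, 0, -2),
  (1, -2, -3, 2, 2),
  (1, -2, -3, 2, 4),
  (1, -2, -3, 4, -2),
  (1, -2, -3, 4, 0),
  (1, -2, -3, 4, 2),
  (1, -2, -3, 6, -2),
  (1, -2, -3, 6, 0),
  (1, -2, -3, 6, 2),
  (1, -2, -3, 8, -2),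
  (1, -2, -3, 8, 0),
  (1, -2, -3, 8, 2),
  (1, -2, -3, 10, -2),
  (1, -2, -3, 10, 0),
  (1, -2, -3, 10, 2),
  (1, -2, -3, 12, -2),
  (1, -2, -1, 2, 0),
  (1, -2, -1, 2, 2),
  (1, -2, -1, 4, -2),
  (1, -2, -1, 4, 0),
  (1, -2, -1, 4, 2),
  (1, -2, -1, 6, -2),
  (1, -2, -1, 6, 0),
  (1, -2, -1, 6, 2),
  (1, -2, -1, 8, -2),
  (1, -2, 1, -2, 4),
  (1, -2, 1, -2, 6),
  (1, -2, 1, 0, 2),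
  (1, -2, 1, 2, -2)]

def S6 : List T := [
  (1, -2, 1, 2, 0),
  (1, -2, 1, 2, 2),
  (1, -2, 1, 4, -2),
  (1, -2, 1, 4, 0),
  (1, -2, 1, 4, 2),
  (1, -2, 1, 6, -2),
  (1, -2, 1, 6, 0),
  (1, -2, 1, 6, 2),
  (1, -2, 1, 8, -2),
  (1, -2, 3, -2, 2),
  (1, -2, 3, -2, 4),
  (1, -2, 3, 0, -2),
  (1, -2, 3, 0, 0),
  (1, -2, 3, 0, 2),
  (1, -2, 3, 2, -2),
  (1, -2, 3, 2, 0),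
  (1, -2, 3, 2, 2),
  (1, -2, 3, 4, -2),
  (1, -2, 3, 4, 0),
  (1, -2, 3, 4, 2),
  (1, -2, 3, 6, -2),
  (1, -2, 3, 6, 0),
  (1, -2, 3, 6, 2),
  (1, -2, 3, 8, -2),
  (1, -2, 5, -2, 0),
  (1, -2, 5, -2, 2),
  (1, -2, 5, -2, 4),
  (1, -2, 5, 0, -2),
  (1, -2, 5, 0, 0),
  (1, -2, 5, 0, 2),
  (1, -2, 5, 2, -2),
  (1, -2, 5, 2, 0),
  (1, -2, 5, 2, 2),
  (1, -2, 5, 4, -2),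
  (1, -2, 5, 4, 0),
  (1, -2, 5, 4, 2),
  (1, -2, 5, 6, -2),
  (1, -2, 5, 6, 0),
  (1, -2, 5, 6, 2),
  (1, -2, 5, 8, -2),
  (1, -2, 7, -2, 0),
  (1, -2, 7, -2, 2),
  (1, -2, 7, -2, 4),
  (1, -2, 7, 0, -2),
  (1, -2, 7, 0, 0),
  (1, -2, 7, 0, 2),
  (1, -2, 7, 2, -2),
  (1, -2, 7, 2, 0),
  (1, -2, 7, 2, 2),
  (1, -2, 7, 4, -2),
  (1, -2, 7, 4, 0),
  (1, -2, 7, 4, 2),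
  (1, -2, 7, 6, -2),
  (1, -2, 7, 6, 0),
  (1, -2, 7, 6, 2),
  (1, -2, 7, 8, -2),
  (1, -2, 9, -2, 0),
  (1, -2, 9, -2, 2),
  (1, -2, 9, -2, 4),
  (1, -2, 9, 0, -2)]

def S7 : List T := [
  (1, -2, 11, -2, 0),
  (1, -2, 11, -2, 2),
  (1, -2, 11, -2, 4),
  (1, -2, 11, 0, -2),
  (1, 0, -5, 0, 2),
  (1, 0, -5, 0, 4),
  (1, 0, -5, 2, -2),
  (1, 0, -5, 2, 0),
  (1, 0, -5, 2, 2),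
  (1, 0, -5, 4, -2),
  (1, 0, -5, 4, 0),
  (1, 0, -5, 4, 2),
  (1, 0, -5, 6, -2),
  (1, 0, -5, 6, 0),
  (1, 0, -5, 6, 2),
  (1, 0, -5, 8, -2),
  (1, 0, -5, 8, 0),
  (1, 0, -5, 8, 2),
  (1, 0, -5, 10, -2),
  (1, 0, -3, 0, 0),
  (1, 0, -3, 0, 2),
  (1, 0, -3, 2, -2),
  (1, 0, -3, 2, 0),
  (1, 0, -3, 2, 2),
  (1, 0, -3, 4, -2),
  (1, 0, -3, 4, 0),
  (1, 0, -3, 4, 2),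
  (1, 0, -3, 6, -2),
  (1, 0, -1, -4, 4),
  (1, 0, -1, -4, 6),
  (1, 0, -1, -2, 2),
  (1, 0, -1, 0, -2),
  (1, 0, -1, 0, 0),
  (1, 0, -1, 0, 2),
  (1, 0, -1, 2, -2),
  (1, 0, -1, 2, 0),
  (1, 0, -1, 2, 2),
  (1, 0, -1, 4, -2),
  (1, 0, -1, 4, 0),
  (1, 0, -1, 4, 2),
  (1, 0, -1, 6, -2),
  (1, 0, 1, -4, 2),
  (1, 0, 1, -4, 4),
  (1, 0, 1, -2, -2),
  (1, 0, 1, -2, 0),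
  (1, 0, 1, -2, 2),
  (1, 0, 1, 0, -2),
  (1, 0, 1, 0, 0),
  (1, 0, 1, 0, 2),
  (1, 0, 1, 2, -2),
  (1, 0, 1, 2, 0),
  (1, 0, 1, 2, 2),
  (1, 0, 1, 4, -2),
  (1, 0, 1, 4, 0),
  (1, 0, 1, 4, 2),
  (1, 0, 1, 6, -2),
  (1, 0, 3, -4, 0),
  (1, 0, 3, -4, 2),
  (1, 0, 3, -4, 4),
  (1, 0, 3, -2, -2)]

def S8 : List T := [
  (1, 0, 3, -2, 0),
  (1, 0, 3, -2, 2),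
  (1, 0, 3, 0, -2),
  (1, 0, 3, 0, 0),
  (1, 0, 3, 0, 2),
  (1, 0, 3, 2, -2),
  (1, 0, 3, 2, 0),
  (1, 0, 3, 2, 2),
  (1, 0, 3, 4, -2),
  (1, 0, 3, 4, 0),
  (1, 0, 3, 4, 2),
  (1, 0, 3, 6, -2),
  (1, 0, 5, -4, 0),
  (1, 0, 5, -4, 2),
  (1, 0, 5, -4, 4),
  (1, 0, 5, -2, -2),
  (1, 0, 5, -2, 0),
  (1, 0, 5, -2, 2),
  (1, 0, 5, 0, -2),
  (1, 0, 5, 0, 0),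
  (1, 0, 5, 0, 2),
  (1, 0, 5, 2, -2),
  (1, 0, 5, 2, 0),
  (1, 0, 5, 2, 2),
  (1, 0, 5, 4, -2),
  (1, 0, 5, 4, 0),
  (1, 0, 5, 4, 2),
  (1, 0, 5, 6, -2),
  (1, 0, 7, -4, 0),
  (1, 0, 7, -4, 2),
  (1, 0, 7, -4, 4),
  (1, 0, 7, -2, -2),
  (1, 0, 9, -4, 0),
  (1, 0, 9, -4, 2),
  (1, 0, 9, -4, 4),
  (1, 0, 9, -2, -2),
  (1, 2, -5, -2, 0),
  (1, 2, -5, -2, 2),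
  (1, 2, -5, -2, 4),
  (1, 2, -5, 0, -2),
  (1, 2, -5, 0, 0),
  (1, 2, -5, 0, 2),
  (1, 2, -5, 2, -2),
  (1, 2, -5, 2, 0),
  (1, 2, -5, 2, 2),
  (1, 2, -5, 4, -2),
  (1, 2, -5, 4, 0),
  (1, 2, -5, 4, 2),
  (1, 2, -5, 6, -2),
  (1, 2, -5, 6, 0),
  (1, 2, -5, 6, 2),
  (1, 2, -5, 8, -2),
  (1, 2, -3, -4, 0),
  (1, 2, -3, -4, 2),
  (1, 2, -3, -4, 4),
  (1, 2, -3, -2, -2),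
  (1, 2, -3, -2, 0),
  (1, 2, -3, -2, 2),
  (1, 2, -3, 0, -2),
  (1, 2, -3, 0, 0)]

def S9 : List T := [
  (1, 2, -3, 0, 2),
  (1, 2, -3, 2, -2),
  (1, 2, -3, 2, 0),
  (1, 2, -3, 2, 2),
  (1, 2, -3, 4, -2),
  (1, 2, -3, 4, 0),
  (1, 2, -3, 4, 2),
  (1, 2, -3, 6, -2),
  (1, 2, -1, -4, 0),
  (1, 2, -1, -4, 2),
  (1, 2, -1, -4, 4),
  (1, 2, -1, -2, -2),
  (1, 2, -1, -2, 0),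
  (1, 2, -1, -2, 2),
  (1, 2, -1, 0, -2),
  (1, 2, -1, 0, 0),
  (1, 2, -1, 0, 2),
  (1, 2, -1, 2, -2),
  (1, 2, -1, 2, 0),
  (1, 2, -1, 2, 2),
  (1, 2, -1, 4, -2),
  (1, 2, -1, 4, 0),
  (1, 2, -1, 4, 2),
  (1, 2, -1, 6, -2),
  (1, 2, 1, -4, 0),
  (1, 2, 1, -4, 2),
  (1, 2, 1, -4, 4),
  (1, 2, 1, -2, -2),
  (1, 2, 1, -2, 0),
  (1, 2, 1, -2, 2),
  (1, 2, 1, 0, -2),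
  (1, 2, 1, 0, 0),
  (1, 2, 1, 0, 2),
  (1, 2, 1, 2, -2),
  (1, 2, 1, 2, 0),
  (1, 2, 1, 2, 2),
  (1, 2, 1, 4, -2),
  (1, 2, 1, 4, 0),
  (1, 2, 1, 4, 2),
  (1, 2, 1, 6, -2),
  (1, 2, 3, -4, 0),
  (1, 2, 3, -4, 2),
  (1, 2, 3, -4, 4),
  (1, 2, 3, -2, -2),
  (1, 2, 3, -2, 0),
  (1, 2, 3, -2, 2),
  (1, 2, 3, 0, -2),
  (1, 2, 3, 0, 0),
  (1, 2, 3, 0, 2),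
  (1, 2, 3, 2, -2),
  (1, 2, 3, 2, 0),
  (1, 2, 3, 2, 2),
  (1, 2, 3, 4, -2),
  (1, 2, 3, 4, 0),
  (1, 2, 3, 4, 2),
  (1, 2, 3, 6, -2),
  (1, 2, 5, -4, 0),
  (1, 2, 5, -4, 2),
  (1, 2, 5, -4, 4),
  (1, 2, 5, -2, -2)]

def S10 : List T := [
  (1, 2, 5, -2, 0),
  (1, 2, 5, -2, 2),
  (1, 2, 5, 0, -2),
  (1, 2, 5, 0, 0),
  (1, 2, 5, 0, 2),
  (1, 2, 5, 2, -2),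
  (1, 2, 5, 2, 0),
  (1, 2, 5, 2, 2),
  (1, 2, 5, 4, -2),
  (1, 2, 5, 4, 0),
  (1, 2, 5, 4, 2),
  (1, 2, 5, 6, -2),
  (1, 2, 7, -4, 0),
  (1, 2, 7, -4, 2),
  (1, 2, 7, -4, 4),
  (1, 2, 7, -2, -2),
  (1, 4, -5, -2, 0),
  (1, 4, -5, -2, 2),
  (1, 4, -5, -2, 4),
  (1, 4, -5, 0, -2),
  (1, 4, -5, 0, 0),
  (1, 4, -5, 0, 2),
  (1, 4, -5, 2, -2),
  (1, 4, -5, 2, 0),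
  (1, 4, -5, 2, 2),
  (1, 4, -5, 4, -2),
  (1, 4, -5, 4, 0),
  (1, 4, -5, 4, 2),
  (1, 4, -5, 6, -2),
  (1, 4, -5, 6, 0),
  (1, 4, -5, 6, 2),
  (1, 4, -5, 8, -2),
  (1, 4, -3, -4, 0),
  (1, 4, -3, -4, 2),
  (1, 4, -3, -4, 4),
  (1, 4, -3, -2, -2),
  (1, 4, -1, -4, 0),
  (1, 4, -1, -4, 2),
  (1, 4, -1, -4, 4),
  (1, 4, -1, -2, -2),
  (1, 4, 1, -4, 0),
  (1, 4, 1, -4, 2),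
  (1, 4, 1, -4, 4),
  (1, 4, 1, -2, -2),
  (1, 4, 3, -4, 0),
  (1, 4, 3, -4, 2),
  (1, 4, 3, -4, 4),
  (1, 4, 3, -2, -2),
  (1, 4, 5, -4, 0),
  (1, 4, 5, -4, 2),
  (1, 4, 5, -4, 4),
  (1, 4, 5, -2, -2),
  (1, 4, 7, -4, 0),
  (1, 4, 7, -4, 2),
  (1, 4, 7, -4, 4),
  (1, 4, 7, -2, -2),
  (1, 6, -5, -2, 0),
  (1, 6, -5, -2, 2),
  (1, 6, -5, -2, 4),
  (1, 6, -5, 0, -2)]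

def S11 : List T := [
  (1, 6, -3, -4, 0),
  (1, 6, -3, -4, 2),
  (1, 6, -3, -4, 4),
  (1, 6, -3, -2, -2),
  (3, -2, -5, -2, 0),
  (3, -2, -5, -2, 2),
  (3, -2, -5, -2, 4),
  (3, -2, -5, 0, -2),
  (3, -2, -5, 0, 0),
  (3, -2, -5, 0, 2),
  (3, -2, -5, 2, -2),
  (3, -2, -5, 2, 0),
  (3, -2, -5, 2, 2),
  (3, -2, -5, 4, -2),
  (3, -2, -5, 4, 0),
  (3, -2, -5, 4, 2),
  (3, -2, -5, 6, -2),
  (3, -2, -5, 6, 0),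
  (3, -2, -5, 6, 2),
  (3, -2, -5, 8, -2),
  (3, -2, -3, -4, 0),
  (3, -2, -3, -4, 2),
  (3, -2, -3, -4, 4),
  (3, -2, -3, -2, -2),
  (3, -2, -3, -2, 0),
  (3, -2, -3, -2, 2),
  (3, -2, -3, 0, -2),
  (3, -2, -3, 0, 0),
  (3, -2, -3, 0, 2),
  (3, -2, -3, 2, -2),
  (3, -2, -3, 2, 0),
  (3, -2, -3, 2, 2),
  (3, -2, -3, 4, -2),
  (3, -2, -3, 4, 0),
  (3, -2, -3, 4, 2),
  (3, -2, -3, 6, -2),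
  (3, -2, -1, -4, 0),
  (3, -2, -1, -4, 2),
  (3, -2, -1, -4, 4),
  (3, -2, -1, -2, -2),
  (3, -2, -1, -2, 0),
  (3, -2, -1, -2, 2),
  (3, -2, -1, 0, -2),
  (3, -2, -1, 0, 0),
  (3, -2, -1, 0, 2),
  (3, -2, -1, 2, -2),
  (3, -2, -1, 2, 0),
  (3, -2, -1, 2, 2),
  (3, -2, -1, 4, -2),
  (3, -2, -1, 4, 0),
  (3, -2, -1, 4, 2),
  (3, -2, -1, 6, -2),
  (3, -2, 1, -4, 0),
  (3, -2, 1, -4, 2),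
  (3, -2, 1, -4, 4),
  (3, -2, 1, -2, -2),
  (3, -2, 1, -2, 0),
  (3, -2, 1, -2, 2),
  (3, -2, 1, 0, -2),
  (3, -2, 1, 0, 0)]

def S12 : List T := [
  (3, -2, 1, 0, 2),
  (3, -2, 1, 2, -2),
  (3, -2, 1, 2, 0),
  (3, -2, 1, 2, 2),
  (3, -2, 1, 4, -2),
  (3, -2, 1, 4, 0),
  (3, -2, 1, 4, 2),
  (3, -2, 1, 6, -2),
  (3, -2, 3, -4, 0),
  (3, -2, 3, -4, 2),
  (3, -2, 3, -4, 4),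
  (3, -2, 3, -2, -2),
  (3, -2, 3, -2, 0),
  (3, -2, 3, -2, 2),
  (3, -2, 3, 0, -2),
  (3, -2, 3, 0, 0),
  (3, -2, 3, 0, 2),
  (3, -2, 3, 2, -2),
  (3, -2, 3, 2, 0),
  (3, -2, 3, 2, 2),
  (3, -2, 3, 4, -2),
  (3, -2, 3, 4, 0),
  (3, -2, 3, 4, 2),
  (3, -2, 3, 6, -2),
  (3, -2, 5, -4, 0),
  (3, -2, 5, -4, 2),
  (3, -2, 5, -4, 4),
  (3, -2, 5, -2, -2),
  (3, -2, 5, -2, 0),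
  (3, -2, 5, -2, 2),
  (3, -2, 5, 0, -2),
  (3, -2, 5, 0, 0),
  (3, -2, 5, 0, 2),
  (3, -2, 5, 2, -2),
  (3, -2, 5, 2, 0),
  (3, -2, 5, 2, 2),
  (3, -2, 5, 4, -2),
  (3, -2, 5, 4, 0),
  (3, -2, 5, 4, 2),
  (3, -2, 5, 6, -2),
  (3, -2, 7, -4, 0),
  (3, -2, 7, -4, 2),
  (3, -2, 7, -4, 4),
  (3, -2, 7, -2, -2),
  (3, 0, -5, -4, 0),
  (3, 0, -5, -4, 2),
  (3, 0, -5, -4, 4),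
  (3, 0, -5, -2, -2),
  (3, 0, -5, -2, 0),
  (3, 0, -5, -2, 2),
  (3, 0, -5, 0, -2),
  (3, 0, -5, 0, 0),
  (3, 0, -5, 0, 2),
  (3, 0, -5, 2, -2),
  (3, 0, -5, 2, 0),
  (3, 0, -5, 2, 2),
  (3, 0, -5, 4, -2),
  (3, 0, -5, 4, 0),
  (3, 0, -5, 4, 2),
  (3, 0, -5, 6, -2)]

def S13 : List T := [
  (3, 0, -3, -4, 0),
  (3, 0, -3, -4, 2),
  (3, 0, -3, -4, 4),
  (3, 0, -3, -2, -2),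
  (3, 0, -1, -4, 0),
  (3, 0, -1, -4, 2),
  (3, 0, -1, -4, 4),
  (3, 0, -1, -2, -2),
  (3, 0, 1, -4, 0),
  (3, 0, 1, -4, 2),
  (3, 0, 1, -4, 4),
  (3, 0, 1, -2, -2),
  (3, 0, 3, -4, 0),
  (3, 0, 3, -4, 2),
  (3, 0, 3, -4, 4),
  (3, 0, 3, -2, -2),
  (3, 0, 5, -4, 0),
  (3, 0, 5, -4, 2),
  (3, 0, 5, -4, 4),
  (3, 0, 5, -2, -2),
  (3, 2, -5, -4, 0),
  (3, 2, -5, -4, 2),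
  (3, 2, -5, -4, 4),
  (3, 2, -5, -2, -2),
  (3, 2, -5, -2, 0),
  (3, 2, -5, -2, 2),
  (3, 2, -5, 0, -2),
  (3, 2, -5, 0, 0),
  (3, 2, -5, 0, 2),
  (3, 2, -5, 2, -2),
  (3, 2, -5, 2, 0),
  (3, 2, -5, 2, 2),
  (3, 2, -5, 4, -2),
  (3, 2, -5, 4, 0),
  (3, 2, -5, 4, 2),
  (3, 2, -5, 6, -2),
  (3, 2, -3, -4, 0),
  (3, 2, -3, -4, 2),
  (3, 2, -3, -4, 4),
  (3, 2, -3, -2, -2),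
  (3, 2, -1, -4, 0),
  (3, 2, -1, -4, 2),
  (3, 2, -1, -4, 4),
  (3, 2, -1, -2, -2),
  (3, 2, 1, -4, 0),
  (3, 2, 1, -4, 2),
  (3, 2, 1, -4, 4),
  (3, 2, 1, -2, -2),
  (3, 2, 3, -4, 0),
  (3, 2, 3, -4, 2),
  (3, 2, 3, -4, 4),
  (3, 2, 3, -2, -2),
  (3, 2, 5, -4, 0),
  (3, 2, 5, -4, 2),
  (3, 2, 5, -4, 4),
  (3, 2, 5, -2, -2),
  (3, 4, -5, -4, 0),
  (3, 4, -5, -4, 2),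
  (3, 4, -5, -4, 4),
  (3, 4, -5, -2, -2)]

def S14 : List T := [
  (5, -2, -5, -4, 0),
  (5, -2, -5, -4, 2),
  (5, -2, -5, -4, 4),
  (5, -2, -5, -2, -2),
  (5, -2, -5, -2, 0),
  (5, -2, -5, -2, 2),
  (5, -2, -5, 0, -2),
  (5, -2, -5, 0, 0),
  (5, -2, -5, 0, 2),
  (5, -2, -5, 2, -2),
  (5, -2, -5, 2, 0),
  (5, -2, -5, 2, 2),
  (5, -2, -5, 4, -2),
  (5, -2, -5, 4, 0),
  (5, -2, -5, 4, 2),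
  (5, -2, -5, 6, -2),
  (5, -2, -3, -4, 0),
  (5, -2, -3, -4, 2),
  (5, -2, -3, -4, 4),
  (5, -2, -3, -2, -2),
  (5, -2, -1, -4, 0),
  (5, -2, -1, -4, 2),
  (5, -2, -1, -4, 4),
  (5, -2, -1, -2, -2),
  (5, -2, 1, -4, 0),
  (5, -2, 1, -4, 2),
  (5, -2, 1, -4, 4),
  (5, -2, 1, -2, -2),
  (5, -2, 3, -4, 0),
  (5, -2, 3, -4, 2),
  (5, -2, 3, -4, 4),
  (5, -2, 3, -2, -2),
  (5, -2, 5, -4, 0),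
  (5, -2, 5, -4, 2),
  (5, -2, 5, -4, 4),
  (5, -2, 5, -2, -2),
  (5, 0, -5, -4, 0),
  (5, 0, -5, -4, 2),
  (5, 0, -5, -4, 4),
  (5, 0, -5, -2, -2),
  (5, 2, -5, -4, 0),
  (5, 2, -5, -4, 2),
  (5, 2, -5, -4, 4),
  (5, 2, -5, -2, -2),
  (7, -2, -5, -4, 0),
  (7, -2, -5, -4, 2),
  (7, -2, -5, -4, 4),
  (7, -2, -5, -2, -2)]

def S : List T := S0 ++ S1 ++ S2 ++ S3 ++ S4 ++ S5 ++ S6 ++ S7 ++ S8 ++ S9 ++ S10 ++ S11 ++ S12 ++ S13 ++ S14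

lemma forall_S {P : T → Prop} (h0 : ∀ t ∈ S0, P t) (h1 : ∀ t ∈ S1, P t) (h2 : ∀ t ∈ S2, P t) (h3 : ∀ t ∈ S3, P t) (h4 : ∀ t ∈ S4, P t) (h5 : ∀ t ∈ S5, P t) (h6 : ∀ t ∈ S6, P t) (h7 : ∀ t ∈ S7, P t) (h8 : ∀ t ∈ S8, P t) (h9 : ∀ t ∈ S9, P t) (h10 : ∀ t ∈ S10, P t) (h11 : ∀ t ∈ S11, P t) (h12 : ∀ t ∈ S12, P t) (h13 : ∀ t ∈ S13, P t) (h14 : ∀ t ∈ S14, P t) :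
    ∀ t ∈ S, P t := by
  simp only [S, List.forall_mem_append]
  exact ⟨⟨⟨⟨⟨⟨⟨⟨⟨⟨⟨⟨⟨⟨h0, h1⟩, h2⟩, h3⟩, h4⟩, h5⟩, h6⟩, h7⟩, h8⟩, h9⟩, h10⟩, h11⟩, h12⟩, h13⟩, h14⟩

set_option maxRecDepth 40000 in
lemma term0 : ∀ t ∈ S0, ¬ (∀ j, dg j + 2 ≤ -(toFun t j) ∧ -(toFun t j) ≤ -(dg j)) := by decide
set_option maxRecDepth 40000 in
lemma closed0 : ∀ t ∈ S0, ∀ i, toFun t i = -(dg i) → stepT i t ∈ S := by decide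

set_option maxRecDepth 40000 in
lemma term1 : ∀ t ∈ S1, ¬ (∀ j, dg j + 2 ≤ -(toFun t j) ∧ -(toFun t j) ≤ -(dg j)) := by decide
set_option maxRecDepth 40000 in
lemma closed1 : ∀ t ∈ S1, ∀ i, toFun t i = -(dg i) → stepT i t ∈ S := by decide

set_option maxRecDepth 40000 in
lemma term2 : ∀ t ∈ S2, ¬ (∀ j, dg j + 2 ≤ -(toFun t j) ∧ -(toFun t j) ≤ -(dg j)) := by decide
set_option maxRecDepth 40000 in
lemma closed2 : ∀ t ∈ S2, ∀ i, toFun t i = -(dg i) → stepT i t ∈ S := by decide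

set_option maxRecDepth 40000 in
lemma term3 : ∀ t ∈ S3, ¬ (∀ j, dg j + 2 ≤ -(toFun t j) ∧ -(toFun t j) ≤ -(dg j)) := by decide
set_option maxRecDepth 40000 in
lemma closed3 : ∀ t ∈ S3, ∀ i, toFun t i = -(dg i) → stepT i t ∈ S := by decide

set_option maxRecDepth 40000 in
lemma term4 : ∀ t ∈ S4, ¬ (∀ j, dg j + 2 ≤ -(toFun t j) ∧ -(toFun t j) ≤ -(dg j)) := by decide
set_option maxRecDepth 40000 in
lemma closed4 : ∀ t ∈ S4, ∀ i, toFun t i = -(dg i) → stepT i t ∈ S := by decide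

set_option maxRecDepth 40000 in
lemma term5 : ∀ t ∈ S5, ¬ (∀ j, dg j + 2 ≤ -(toFun t j) ∧ -(toFun t j) ≤ -(dg j)) := by decide
set_option maxRecDepth 40000 in
lemma closed5 : ∀ t ∈ S5, ∀ i, toFun t i = -(dg i) → stepT i t ∈ S := by decide

set_option maxRecDepth 40000 in
lemma term6 : ∀ t ∈ S6, ¬ (∀ j, dg j + 2 ≤ -(toFun t j) ∧ -(toFun t j) ≤ -(dg j)) := by decide
set_option maxRecDepth 40000 in
lemma closed6 : ∀ t ∈ S6, ∀ i, toFun t i = -(dg i) → stepT i t ∈ S := by decide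

set_option maxRecDepth 40000 in
lemma term7 : ∀ t ∈ S7, ¬ (∀ j, dg j + 2 ≤ -(toFun t j) ∧ -(toFun t j) ≤ -(dg j)) := by decide
set_option maxRecDepth 40000 in
lemma closed7 : ∀ t ∈ S7, ∀ i, toFun t i = -(dg i) → stepT i t ∈ S := by decide

set_option maxRecDepth 40000 in
lemma term8 : ∀ t ∈ S8, ¬ (∀ j, dg j + 2 ≤ -(toFun t j) ∧ -(toFun t j) ≤ -(dg j)) := by decide
set_option maxRecDepth 40000 in
lemma closed8 : ∀ t ∈ S8, ∀ i, toFun t i = -(dg i) → stepT i t ∈ S := by decide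

set_option maxRecDepth 40000 in
lemma term9 : ∀ t ∈ S9, ¬ (∀ j, dg j + 2 ≤ -(toFun t j) ∧ -(toFun t j) ≤ -(dg j)) := by decide
set_option maxRecDepth 40000 in
lemma closed9 : ∀ t ∈ S9, ∀ i, toFun t i = -(dg i) → stepT i t ∈ S := by decide

set_option maxRecDepth 40000 in
lemma term10 : ∀ t ∈ S10, ¬ (∀ j, dg j + 2 ≤ -(toFun t j) ∧ -(toFun t j) ≤ -(dg j)) := by decide
set_option maxRecDepth 40000 in
lemma closed10 : ∀ t ∈ S10, ∀ i, toFun t i = -(dg i) → stepT i t ∈ S := by decide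

set_option maxRecDepth 40000 in
lemma term11 : ∀ t ∈ S11, ¬ (∀ j, dg j + 2 ≤ -(toFun t j) ∧ -(toFun t j) ≤ -(dg j)) := by decide
set_option maxRecDepth 40000 in
lemma closed11 : ∀ t ∈ S11, ∀ i, toFun t i = -(dg i) → stepT i t ∈ S := by decide

set_option maxRecDepth 40000 in
lemma term12 : ∀ t ∈ S12, ¬ (∀ j, dg j + 2 ≤ -(toFun t j) ∧ -(toFun t j) ≤ -(dg j)) := by decide
set_option maxRecDepth 40000 in
lemma closed12 : ∀ t ∈ S12, ∀ i, toFun t i = -(dg i) → stepT i t ∈ S := by decide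

set_option maxRecDepth 40000 in
lemma term13 : ∀ t ∈ S13, ¬ (∀ j, dg j + 2 ≤ -(toFun t j) ∧ -(toFun t j) ≤ -(dg j)) := by decide
set_option maxRecDepth 40000 in
lemma closed13 : ∀ t ∈ S13, ∀ i, toFun t i = -(dg i) → stepT i t ∈ S := by decide

set_option maxRecDepth 40000 in
lemma term14 : ∀ t ∈ S14, ¬ (∀ j, dg j + 2 ≤ -(toFun t j) ∧ -(toFun t j) ≤ -(dg j)) := by decide
set_option maxRecDepth 40000 in
lemma closed14 : ∀ t ∈ S14, ∀ i, toFun t i = -(dg i) → stepT i t ∈ S := by decide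

lemma hterm : ∀ t ∈ S, ¬ (∀ j, dg j + 2 ≤ -(toFun t j) ∧ -(toFun t j) ≤ -(dg j)) :=
  forall_S term0 term1 term2 term3 term4 term5 term6 term7 term8 term9 term10 term11 term12 term13 term14

lemma hclosed : ∀ t ∈ S, ∀ i, toFun t i = -(dg i) → stepT i t ∈ S :=
  forall_S closed0 closed1 closed2 closed3 closed4 closed5 closed6 closed7 closed8 closed9 closed10 closed11 closed12 closed13 closed14

lemma noPath : ∀ (l : List (Fin 5)) (t : T), t ∈ S → ¬ goodPath (toFun t) l := by
  intro l
  induction l with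
  | nil =>
      intro t ht h
      exact hterm t ht (fun j => by rw [dgM]; exact h j)
  | cons i l ih =>
      rintro t ht ⟨h1, h2⟩
      refine ih (stepT i t) (hclosed t ht i ?_) ?_
      · rw [dgM]; exact h1
      · rw [step_comm]; exact h2

def badList : List T := [
  (1, 0, -3, 0, 0),
  (1, 0, -3, 0, 2),
  (1, 0, -3, 2, 0),
  (1, 0, -3, 2, 2),
  (1, 0, -3, 4, 0),
  (1, 0, -3, 4, 2),
  (1, 0, -1, -2, 2),
  (1, 0, -1, 0, 0),
  (1, 0, -1, 0, 2),
  (1, 0, -1, 2, 0),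
  (1, 0, -1, 2, 2),
  (1, 0, -1, 4, 0),
  (1, 0, -1, 4, 2),
  (1, 0, 1, -2, 0),
  (1, 0, 1, -2, 2),
  (1, 0, 1, 0, 0),
  (1, 0, 1, 0, 2),
  (1, 0, 1, 2, 0),
  (1, 0, 1, 2, 2),
  (1, 0, 1, 4, 0),
  (1, 0, 1, 4, 2),
  (1, 0, 3, -2, 0),
  (1, 0, 3, -2, 2),
  (1, 0, 3, 0, 0),
  (1, 0, 3, 0, 2),
  (1, 0, 3, 2, 0),
  (1, 0, 3, 2, 2),
  (1, 0, 3, 4, 0),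
  (1, 0, 3, 4, 2),
  (1, 0, 5, -2, 0),
  (1, 0, 5, -2, 2),
  (1, 0, 5, 0, 0),
  (1, 0, 5, 0, 2),
  (1, 0, 5, 2, 0),
  (1, 0, 5, 2, 2),
  (1, 0, 5, 4, 0),
  (1, 0, 5, 4, 2),
  (1, 2, -3, -2, 0),
  (1, 2, -3, -2, 2),
  (1, 2, -3, 0, 0),
  (1, 2, -3, 0, 2),
  (1, 2, -3, 2, 0),
  (1, 2, -3, 2, 2),
  (1, 2, -3, 4, 0),
  (1, 2, -3, 4, 2),
  (1, 2, -1, -2, 0),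
  (1, 2, -1, -2, 2),
  (1, 2, -1, 0, 0),
  (1, 2, -1, 0, 2),
  (1, 2, -1, 2, 0),
  (1, 2, -1, 2, 2),
  (1, 2, -1, 4, 0),
  (1, 2, -1, 4, 2),
  (1, 2, 1, -2, 0),
  (1, 2, 1, -2, 2),
  (1, 2, 1, 0, 0),
  (1, 2, 1, 0, 2),
  (1, 2, 1, 2, 0),
  (1, 2, 1, 2, 2),
  (1, 2, 1, 4, 0),
  (1, 2, 1, 4, 2),
  (1, 2, 3, -2, 0),
  (1, 2, 3, -2, 2),
  (1, 2, 3, 0, 0),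
  (1, 2, 3, 0, 2),
  (1, 2, 3, 2, 0),
  (1, 2, 3, 2, 2),
  (1, 2, 3, 4, 0),
  (1, 2, 3, 4, 2),
  (1, 2, 5, -2, 0),
  (1, 2, 5, -2, 2),
  (1, 2, 5, 0, 0),
  (1, 2, 5, 0, 2),
  (1, 2, 5, 2, 0),
  (1, 2, 5, 2, 2),
  (1, 2, 5, 4, 0),
  (1, 2, 5, 4, 2)]

set_option maxRecDepth 40000 in
lemma bad_mem : ∀ t ∈ badList, t ∈ S := by decide

/-- Among the characteristic pairing vectors u (u_i ≡ M_ii mod 2) in the range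
M_ii+2 ≤ u_i ≤ -M_ii, exactly three admit a full path, namely
(1,0,-3,-2,0), (1,0,-3,-2,2) and (1,0,-1,-2,0). -/
theorem full_path_classification :
    {u : Fin 5 → ℤ |
        (∀ i, u i ≡ M i i [ZMOD 2]) ∧
        (∀ i, M i i + 2 ≤ u i ∧ u i ≤ -M i i) ∧
        ∃ l : List (Fin 5), goodPath u l} =
      {![1, 0, -3, -2, 0], ![1, 0, -3, -2, 2], ![1, 0, -1, -2, 0]} := by
  ext u
  simp only [Set.mem_setOf_eq, Set.mem_insert_iff, Set.mem_singleton_iff]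
  constructor
  · rintro ⟨hmod, hbox, l, hl⟩
    obtain ⟨a, b, c, d, e, rfl⟩ : ∃ a b c d e, u = toFun (a, b, c, d, e) :=
      ⟨u 0, u 1, u 2, u 3, u 4, by funext j; fin_cases j <;> rfl⟩
    have B0 : (-1 : ℤ) + 2 ≤ a ∧ a ≤ -(-1) := hbox 0
    have B1 : (-2 : ℤ) + 2 ≤ b ∧ b ≤ -(-2) := hbox 1
    have B2 : (-5 : ℤ) + 2 ≤ c ∧ c ≤ -(-5) := hbox 2
    have B3 : (-4 : ℤ) + 2 ≤ d ∧ d ≤ -(-4) := hbox 3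
    have B4 : (-2 : ℤ) + 2 ≤ e ∧ e ≤ -(-2) := hbox 4
    have P0 : a % 2 = (-1 : ℤ) % 2 := hmod 0
    have P1 : b % 2 = (-2 : ℤ) % 2 := hmod 1
    have P2 : c % 2 = (-5 : ℤ) % 2 := hmod 2
    have P3 : d % 2 = (-4 : ℤ) % 2 := hmod 3
    have P4 : e % 2 = (-2 : ℤ) % 2 := hmod 4
    have ha : a = 1 := by omega
    have hb : b = 0 ∨ b = 2 := by omega
    have hc : c = -3 ∨ c = -1 ∨ c = 1 ∨ c = 3 ∨ c = 5 := by omega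
    have hd : d = -2 ∨ d = 0 ∨ d = 2 ∨ d = 4 := by omega
    have he : e = 0 ∨ e = 2 := by omega
    subst ha
    rcases hb with rfl | rfl <;> rcases hc with rfl | rfl | rfl | rfl | rfl <;>
      rcases hd with rfl | rfl | rfl | rfl <;> rcases he with rfl | rfl <;>
      first
        | (left; rfl)
        | (right; left; rfl)
        | (right; right; rfl)
        | exact absurd hl (noPath l _ (bad_mem _ (by decide)))
  · rintro (rfl | rfl | rfl)
    · exact ⟨by decide, by decide, [0, 1, 0], by decide⟩
    · exact ⟨by decide, by decide, [0, 1, 0, 4, 3, 0, 1, 0, 2, 0, 1, 0, 3, 0, 1, 0, 4], by decide⟩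
    · exact ⟨by decide, by decide, [0, 1, 0], by decide⟩
end
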